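/- Let 𝒜 be a unital complex *-algebra and φ : 𝒜 → ℂ a linear functional with φ(1) = 1. Let B be a unital *-subalgebra of 𝒜 and let v ∈ 𝒜 be a unitary (v*v = vv* = 1) with φ(v) = 0 and φ(v*) = 0. Assume that B and the unital *-subalgebra generated by v are freely independent with respect to φ. Then the sets vBv* := {v b v* : b ∈ B} and B are freely independent with respect to φ. -/

import Mathlib

/-- Free independence of a family of subsets of a unital complex `*`-algebra `A` with
respect to a unital linear functional `φ`: alternating products of centered elements of the
unital `*`-subalgebras generated by the respective subsets have vanishing expectation. -/
def FreelyIndependent {A : Type*} [Ring A] [Algebra ℂ A] [StarRing A] [StarModule ℂ A]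
    (φ : A →ₗ[ℂ] ℂ) {κ : Type*} (S : κ → Set A) : Prop :=
  ∀ (p : ℕ), 1 ≤ p → ∀ (idx : Fin p → κ) (a : Fin p → A),
    (∀ j, a j ∈ StarAlgebra.adjoin ℂ (S (idx j))) →
    (∀ j, φ (a j) = 0) →
    (∀ (j : ℕ) (h : j + 1 < p), idx ⟨j, by omega⟩ ≠ idx ⟨j + 1, h⟩) →
    φ (List.ofFn a).prod = 0

/-!
Since `v` is unitary, `x ↦ v x v⋆` is a `*`-automorphism, so every element of the `*`-algebra
generated by `v B v⋆` is `v b v⋆` with `b ∈ B`; freeness of `B` and `v` gives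
`φ (v b v⋆) = φ b`, so `b` is centered whenever `v b v⋆` is. Replacing each such letter by the
three letters `v, b, v⋆` turns an alternating centered word in `v B v⋆` and `B` into an
alternating centered word in `B` and `{v}` with the same product, whose expectation vanishes
by hypothesis.
-/

section

variable {A : Type*} [Ring A] [Algebra ℂ A] [StarRing A] [StarModule ℂ A] {φ : A →ₗ[ℂ] ℂ}

open List

theorem freelyIndependent_iff_forall_list {κ : Type*} {S : κ → Set A} :
    FreelyIndependent φ S ↔ ∀ L : List (κ × A), L ≠ [] →
      (∀ x ∈ L, x.2 ∈ StarAlgebra.adjoin ℂ (S x.1) ∧ φ x.2 = 0) →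
      L.IsChain (fun x y => x.1 ≠ y.1) → φ (L.map Prod.snd).prod = 0 := by
  constructor
  · intro h L hne hmem hchain
    have := h L.length (length_pos_iff.mpr hne) (fun j => L[j].1) (fun j => L[j].2)
      (fun j => (hmem _ (getElem_mem _)).1) (fun j => (hmem _ (getElem_mem _)).2)
      (fun j hj => isChain_iff_getElem.mp hchain j hj)
    rwa [show (ofFn fun j : Fin L.length => L[j].2) = L.map Prod.snd by
      apply ext_getElem <;> simp] at this
  · intro h p hp idx a hmem hφ halt
    simpa [map_ofFn, Function.comp_def] using h (ofFn fun j => (idx j, a j))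
      (by simp; omega) (by simpa [mem_ofFn] using fun j => ⟨hmem j, hφ j⟩)
      (isChain_iff_getElem.mpr fun j hj => by simpa using halt j (by simpa using hj))

theorem FreelyIndependent.map_conj_eq {S : Set A} {v : A} (hfree : FreelyIndependent φ ![S, {v}])
    (hφ1 : φ 1 = 1) (hvv : v * star v = 1) (hφv : φ v = 0) (hφvs : φ (star v) = 0)
    {b : A} (hb : b ∈ StarAlgebra.adjoin ℂ S) : φ (v * b * star v) = φ b := by
  have hv : v ∈ StarAlgebra.adjoin ℂ {v} := StarAlgebra.self_mem_adjoin_singleton ℂ v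
  have hcentered : φ (v * (b - φ b • 1) * star v) = 0 := by
    simpa [mul_assoc] using freelyIndependent_iff_forall_list.mp hfree
      [(1, v), (0, b - φ b • 1), (1, star v)] (by simp)
      (by simpa [hφ1, hφv, hφvs, hv, star_mem hv] using
        sub_mem hb (Subalgebra.smul_mem _ (one_mem _) _))
      (by simp)
  simpa [mul_sub, sub_mul, hvv, hφ1, sub_eq_zero] using hcentered

theorem star_mul_mul_mem_of_mem_adjoin_conj {B : StarSubalgebra ℂ A} {v a : A}
    (hv : v ∈ unitary A) (ha : a ∈ StarAlgebra.adjoin ℂ ((fun b => v * b * star v) '' B)) :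
    star v * a * v ∈ B := by
  set u : unitary A := ⟨v, hv⟩
  have hle : StarAlgebra.adjoin ℂ ((fun b => v * b * star v) '' B) ≤
      B.map (Unitary.conjStarAlgAut ℂ A u).toStarAlgHom :=
    StarAlgebra.adjoin_le (by rw [StarSubalgebra.coe_map]; rfl)
  obtain ⟨b, hb, rfl⟩ := StarSubalgebra.mem_map.mp (hle ha)
  show (Unitary.conjStarAlgAut ℂ A u).symm (Unitary.conjStarAlgAut ℂ A u b) ∈ B
  rwa [StarAlgEquiv.symm_apply_apply]

end

section

variable {A : Type*} [Ring A] [StarRing A] {v : A}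

open List

-- Indices refer to `![v B v⋆, B]` on the left and to `![B, {v}]` on the right.
def expandConjLetter (v : A) : Fin 2 × A → List (Fin 2 × A)
  | (0, a) => [(1, v), (0, star v * a * v), (1, star v)]
  | (1, a) => [(0, a)]

theorem mul_star_mul_mul_mul_star (hv : v * star v = 1) (a : A) :
    v * (star v * a * v) * star v = a := by
  rw [← mul_assoc, ← mul_assoc, hv, one_mul, mul_assoc, hv, mul_one]

theorem prod_map_snd_expandConjLetter (hv : v * star v = 1) (x : Fin 2 × A) :
    ((expandConjLetter v x).map Prod.snd).prod = x.2 := by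
  obtain ⟨i, a⟩ := x
  fin_cases i
  · simpa [expandConjLetter, mul_assoc] using mul_star_mul_mul_mul_star hv a
  · simp [expandConjLetter]

theorem prod_map_snd_flatMap_expandConjLetter (hv : v * star v = 1) (L : List (Fin 2 × A)) :
    ((L.flatMap (expandConjLetter v)).map Prod.snd).prod = (L.map Prod.snd).prod := by
  induction L <;> simp [*, prod_map_snd_expandConjLetter hv]

theorem expandConjLetter_ne_nil (x : Fin 2 × A) : expandConjLetter v x ≠ [] := by
  obtain ⟨i, a⟩ := x
  fin_cases i <;> simp [expandConjLetter]

theorem isChain_expandConjLetter (x : Fin 2 × A) :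
    (expandConjLetter v x).IsChain (fun y z => y.1 ≠ z.1) := by
  obtain ⟨i, a⟩ := x
  fin_cases i <;> simp [expandConjLetter]

theorem fst_eq_rev_of_mem_head?_expandConjLetter {x y : Fin 2 × A}
    (hy : y ∈ (expandConjLetter v x).head?) : y.1 = x.1.rev := by
  obtain ⟨i, a⟩ := x
  fin_cases i <;> obtain rfl := Option.mem_some_iff.mp hy <;> rfl

theorem fst_eq_rev_of_mem_getLast?_expandConjLetter {x y : Fin 2 × A}
    (hy : y ∈ (expandConjLetter v x).getLast?) : y.1 = x.1.rev := by
  obtain ⟨i, a⟩ := x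
  fin_cases i <;> obtain rfl := Option.mem_some_iff.mp hy <;> rfl

theorem List.IsChain.flatMap_expandConjLetter {L : List (Fin 2 × A)}
    (hL : L.IsChain (fun x y => x.1 ≠ y.1)) :
    (L.flatMap (expandConjLetter v)).IsChain (fun y z => y.1 ≠ z.1) := by
  rw [flatMap_def, isChain_flatten (by simp [expandConjLetter_ne_nil])]
  refine ⟨?_, (isChain_map _).mpr (hL.imp ?_)⟩
  · intro l hl
    obtain ⟨x, -, rfl⟩ := mem_map.mp hl
    exact isChain_expandConjLetter x
  · intro x x' hxx' y hy y' hy'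
    rw [fst_eq_rev_of_mem_getLast?_expandConjLetter hy,
      fst_eq_rev_of_mem_head?_expandConjLetter hy']
    exact Fin.rev_inj.not.mpr hxx'

end

section

variable {A : Type*} [Ring A] [Algebra ℂ A] [StarRing A] [StarModule ℂ A] {φ : A →ₗ[ℂ] ℂ}
  {B : StarSubalgebra ℂ A} {v : A}

theorem mem_adjoin_of_mem_expandConjLetter (hfree : FreelyIndependent φ ![(B : Set A), {v}])
    (hφ1 : φ 1 = 1) (hv : v ∈ unitary A) (hφv : φ v = 0) (hφvs : φ (star v) = 0)
    {x : Fin 2 × A} (hx : x.2 ∈ StarAlgebra.adjoin ℂ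
      (![(fun b => v * b * star v) '' (B : Set A), (B : Set A)] x.1) ∧ φ x.2 = 0)
    {y : Fin 2 × A} (hy : y ∈ expandConjLetter v x) :
    y.2 ∈ StarAlgebra.adjoin ℂ (![(B : Set A), {v}] y.1) ∧ φ y.2 = 0 := by
  obtain ⟨i, a⟩ := x
  fin_cases i
  · obtain ⟨ha, hφa⟩ := hx
    have hvv := Unitary.mul_star_self_of_mem hv
    have hb := star_mul_mul_mem_of_mem_adjoin_conj hv ha
    have hφb : φ (star v * a * v) = 0 := by
      rw [← hfree.map_conj_eq hφ1 hvv hφv hφvs (StarAlgebra.subset_adjoin ℂ _ hb)]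
      rwa [mul_star_mul_mul_mul_star hvv]
    have hv' : v ∈ StarAlgebra.adjoin ℂ {v} := StarAlgebra.self_mem_adjoin_singleton ℂ v
    simp only [expandConjLetter, List.mem_cons, List.not_mem_nil, or_false] at hy
    rcases hy with rfl | rfl | rfl
    · exact ⟨hv', hφv⟩
    · exact ⟨StarAlgebra.subset_adjoin ℂ _ hb, hφb⟩
    · exact ⟨star_mem hv', hφvs⟩
  · simp only [expandConjLetter, List.mem_singleton] at hy
    subst hy
    exact hx

end

/-- If `v` is a unitary with `φ(v) = φ(v^*) = 0` which is free from a unital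
`*`-subalgebra `B`, then `v B v^*` and `B` are freely independent. -/
theorem freelyIndependent_conj_of_free {A : Type*} [Ring A] [Algebra ℂ A] [StarRing A]
    [StarModule ℂ A] (φ : A →ₗ[ℂ] ℂ) (hφ1 : φ 1 = 1)
    (B : StarSubalgebra ℂ A) (v : A) (hv : v ∈ unitary A)
    (hφv : φ v = 0) (hφvs : φ (star v) = 0)
    (hfree : FreelyIndependent φ ![(B : Set A), {v}]) :
    FreelyIndependent φ ![(fun b => v * b * star v) '' (B : Set A), (B : Set A)] := by
  refine freelyIndependent_iff_forall_list.mpr fun L hne hmem hchain => ?_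
  rw [← prod_map_snd_flatMap_expandConjLetter (Unitary.mul_star_self_of_mem hv)]
  refine freelyIndependent_iff_forall_list.mp hfree _ ?_ ?_ hchain.flatMap_expandConjLetter
  · obtain ⟨x, hx⟩ := List.exists_mem_of_ne_nil L hne
    exact fun h => expandConjLetter_ne_nil x (List.flatMap_eq_nil_iff.mp h x hx)
  · intro y hy
    obtain ⟨x, hx, hyx⟩ := List.mem_flatMap.mp hy
    exact mem_adjoin_of_mem_expandConjLetter hfree hφ1 hv hφv hφvs (hmem x hx) hyx
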